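/- Let ℏ, z ∈ ℂ with ℏ ≠ 0 and assume (z + ℏ/2)/ℏ is not an integer. Then i·G(−z) · (1 + i·exp(iπz/ℏ)) = G(z) · (i·exp(iπz/ℏ) − 1). Equivalently, the two non-perturbative completions G(z) and i·G(−z) of the Q-operator normalizing factor differ by the multiplicative factor (i·exp(iπz/ℏ) − 1)/(1 + i·exp(iπz/ℏ)), a trigonometric function of z/ℏ. (This is the relation, stated in the paper up to an overall sign, showing that the two completions agree up to exponentially suppressed terms.) -/

import Mathlib

open Complex

/-- The normalizing factor `G(z)` of the 't Hooft line / Q-operator. -/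
noncomputable def Gnorm (ℏ z : ℂ) : ℂ :=
  (2*ℏ) ^ (-(1/2 : ℂ)) * Complex.Gamma ((z + ℏ/2) / (2*ℏ)) /
    Complex.Gamma ((z + 3*ℏ/2) / (2*ℏ))

/-
Put `s = (z + ℏ/2)/(2ℏ)`. Then `G(z) ∝ Γ(s)/Γ(s + 1/2)` and `G(-z) ∝ Γ(1/2 - s)/Γ(1 - s)`
with the same prefactor, and `i e^{iπz/ℏ} = e^{2πis}`. Cross-multiplying, the two Euler
reflection formulas reduce the claim to `i sin(πs) (1 + e^{2πis}) = cos(πs) (e^{2πis} - 1)`,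
where both sides equal `2i sin(πs) cos(πs) e^{iπs}`. The hypothesis `2s ∉ ℤ` is exactly
`sin(2πs) ≠ 0`, which keeps every Gamma value and trigonometric factor away from zero.
-/

open scoped Real

namespace Complex

theorem Gamma_one_half_add_mul_Gamma_one_half_sub (s : ℂ) :
    Gamma (1 / 2 + s) * Gamma (1 / 2 - s) = π / cos (π * s) := by
  have h := Gamma_mul_Gamma_one_sub (1 / 2 + s)
  rwa [show 1 - (1 / 2 + s) = 1 / 2 - s by ring, show π * (1 / 2 + s) = π * s + π / 2 by ring,
    sin_add_pi_div_two] at h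

theorem I_mul_sin_mul_one_add_exp (x : ℂ) :
    I * sin x * (1 + exp (2 * x * I)) = cos x * (exp (2 * x * I) - 1) := by
  rw [show 2 * x * I = x * I + x * I by ring, exp_add, exp_mul_I]
  linear_combination (cos x * sin x ^ 2 + I * sin x ^ 3) * I_sq
    - (I * sin x + cos x) * sin_sq_add_cos_sq x

theorem sin_pi_mul_ne_zero_and_cos_pi_mul_ne_zero {s : ℂ} (hs : ∀ n : ℤ, 2 * s ≠ n) :
    sin (π * s) ≠ 0 ∧ cos (π * s) ≠ 0 := by
  have h : sin (2 * (π * s)) ≠ 0 := sin_ne_zero_iff.mpr fun k hk ↦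
    hs k (mul_right_cancel₀ (ofReal_ne_zero.mpr Real.pi_ne_zero) (by linear_combination hk))
  rw [sin_two_mul] at h
  exact ⟨right_ne_zero_of_mul (left_ne_zero_of_mul h), right_ne_zero_of_mul h⟩

theorem I_mul_Gamma_div_Gamma_reflection {s : ℂ} (hs : ∀ n : ℤ, 2 * s ≠ n) :
    I * (Gamma (1 / 2 - s) / Gamma (1 - s)) * (1 + exp (2 * (π * s) * I))
      = Gamma s / Gamma (1 / 2 + s) * (exp (2 * (π * s) * I) - 1) := by
  obtain ⟨hsin, hcos⟩ := sin_pi_mul_ne_zero_and_cos_pi_mul_ne_zero hs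
  have hπ : (π : ℂ) ≠ 0 := ofReal_ne_zero.mpr Real.pi_ne_zero
  have h₁ := Gamma_mul_Gamma_one_sub s
  have h₂ := Gamma_one_half_add_mul_Gamma_one_half_sub s
  have hΓ₁ : Gamma (1 - s) ≠ 0 :=
    right_ne_zero_of_mul (h₁ ▸ div_ne_zero hπ hsin : Gamma s * Gamma (1 - s) ≠ 0)
  have hΓ₂ : Gamma (1 / 2 + s) ≠ 0 :=
    left_ne_zero_of_mul (h₂ ▸ div_ne_zero hπ hcos : Gamma (1 / 2 + s) * Gamma (1 / 2 - s) ≠ 0)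
  have cleared : I * (Gamma (1 / 2 + s) * Gamma (1 / 2 - s)) * (1 + exp (2 * (π * s) * I))
      = Gamma s * Gamma (1 - s) * (exp (2 * (π * s) * I) - 1) := by
    rw [h₁, h₂, mul_div_assoc', div_mul_eq_mul_div, div_mul_eq_mul_div, div_eq_div_iff hcos hsin]
    linear_combination π * I_mul_sin_mul_one_add_exp (π * s)
  rw [mul_div_assoc', div_mul_eq_mul_div, div_mul_eq_mul_div, div_eq_div_iff hΓ₁ hΓ₂]
  linear_combination cleared

end Complex

theorem Gnorm_eq {ℏ : ℂ} (hℏ : ℏ ≠ 0) (z : ℂ) :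
    Gnorm ℏ z = (2 * ℏ) ^ (-(1 / 2 : ℂ)) * Gamma ((z + ℏ / 2) / (2 * ℏ))
      / Gamma (1 / 2 + (z + ℏ / 2) / (2 * ℏ)) := by
  rw [Gnorm, show (z + 3 * ℏ / 2) / (2 * ℏ) = 1 / 2 + (z + ℏ / 2) / (2 * ℏ) by field_simp; ring]

theorem Gnorm_neg_eq {ℏ : ℂ} (hℏ : ℏ ≠ 0) (z : ℂ) :
    Gnorm ℏ (-z) = (2 * ℏ) ^ (-(1 / 2 : ℂ)) * Gamma (1 / 2 - (z + ℏ / 2) / (2 * ℏ))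
      / Gamma (1 - (z + ℏ / 2) / (2 * ℏ)) := by
  rw [Gnorm, show (-z + ℏ / 2) / (2 * ℏ) = 1 / 2 - (z + ℏ / 2) / (2 * ℏ) by field_simp; ring,
    show (-z + 3 * ℏ / 2) / (2 * ℏ) = 1 - (z + ℏ / 2) / (2 * ℏ) by field_simp; ring]

/-- the two non-perturbative completions `G(z)` and `i·G(−z)` differ by
the trigonometric factor `(i e^{iπz/ℏ} − 1)/(1 + i e^{iπz/ℏ})`:
`i G(−z) (1 + i e^{iπz/ℏ}) = G(z) (i e^{iπz/ℏ} − 1)`. -/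
theorem I_Gnorm_neg_trig_relation (ℏ z : ℂ) (hℏ : ℏ ≠ 0)
    (h : ∀ n : ℤ, (z + ℏ/2) / ℏ ≠ (n : ℂ)) :
    Complex.I * Gnorm ℏ (-z) *
        (1 + Complex.I * Complex.exp (Complex.I * (Real.pi : ℂ) * z / ℏ))
      = Gnorm ℏ z *
        (Complex.I * Complex.exp (Complex.I * (Real.pi : ℂ) * z / ℏ) - 1) := by
  set s := (z + ℏ / 2) / (2 * ℏ) with hs_def
  have hs : ∀ n : ℤ, 2 * s ≠ n := fun n hn ↦ h n (by rw [← hn, hs_def]; field_simp)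
  have hexp : I * exp (I * π * z / ℏ) = exp (2 * (π * s) * I) := by
    rw [show 2 * (π * s) * I = I * π * z / ℏ + π / 2 * I by rw [hs_def]; field_simp,
      exp_add, exp_pi_div_two_mul_I, mul_comm]
  rw [Gnorm_neg_eq hℏ, Gnorm_eq hℏ, hexp]
  linear_combination (2 * ℏ) ^ (-(1 / 2 : ℂ)) * I_mul_Gamma_div_Gamma_reflection hs
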